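/- Let α ∈ (0,2], let f(·|α,γ) denote the symmetric α-stable density with dispersion γ, and suppose x ↦ log f(x|α,1) is integrable with respect to the standard symmetric α-stable law. Fix m ≥ 1, dispersions γ₁,…,γ_m > 0 and γ′₁,…,γ′_m > 0, and nonnegative integers k, k′ (total numbers of edges). Let (Z_{j,λ})_{λ≥1} and (Z′_{j,λ})_{λ≥1}, j = 1,…,m, be sequences of independent random variables with Z_{j,λ} having density f(·|α,γ_j) and Z′_{j,λ} having density f(·|α,γ′_j). Define the BIC scores S_BIC(N) = Σ_{j=1}^m Σ_{λ=1}^N log f(Z_{j,λ}|α,γ_j) − (k/2)·log N and S′_BIC(N) = Σ_{j=1}^m Σ_{λ=1}^N log f(Z′_{j,λ}|α,γ′_j) − (k′/2)·log N, and the penalized dispersion (MDC) scores S_MDC(N) = −Σ_{j=1}^m ( N·(log γ_j)/α + (k/2)·log N ) and S′_MDC(N) analogously with γ′_j and k′. Then almost surely lim_{N→∞} (1/N)·( S_BIC(N) − S′_BIC(N) ) = lim_{N→∞} (1/N)·( S_MDC(N) − S′_MDC(N) ) = −(1/α)·Σ_{j=1}^m ( log γ_j − log γ′_j ); i.e.,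 the minimum dispersion criterion is asymptotically equivalent to the Bayesian information criterion for symmetric α-stable graphical models. -/

import Mathlib

open MeasureTheory ProbabilityTheory

/-- The (real-valued) symmetric α-stable density with dispersion `γ`, via Fourier inversion. -/
noncomputable def sdens (α γ x : ℝ) : ℝ :=
  (1 / (2 * Real.pi)) *
    (∫ q : ℝ, Complex.exp (((-(γ * |q| ^ α) : ℝ) : ℂ)) *
      Complex.exp (-(Complex.I * ((q * x : ℝ) : ℂ)))).re

/-! The scaling relation `f(x|α,γ) = γ^{-1/α} f(γ^{-1/α} x|α,1)` says that the symmetric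
α-stable law with dispersion `γ` is the image of the standard one under `x ↦ γ^{1/α} x`, so that
`E[log f(Z|α,γ)] = -(log γ)/α + E[log f(X|α,1)]`. The strong law of large numbers turns each
averaged log-likelihood of the BIC score into this expectation; the constant `E[log f(X|α,1)]`
cancels in the difference of two scores and the `(k/2) log N` penalties vanish after division
by `N`. The MDC scores reach the same limit by direct computation. -/

open Real Set Filter Topology

lemma integrable_comp_abs_of_integrableOn_Ioi {E : Type*} [NormedAddCommGroup E] {f : ℝ → E}
    (hf : IntegrableOn f (Ioi 0)) :
    Integrable fun x => f |x| := by
  have hIoi : IntegrableOn (fun x => f |x|) (Ioi 0) :=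
    hf.congr_fun (fun x hx => by rw [abs_of_pos (mem_Ioi.1 hx)]) measurableSet_Ioi
  rw [← integrableOn_univ, ← Iic_union_Ioi (a := (0 : ℝ)), integrableOn_union]
  refine ⟨?_, hIoi⟩
  have hneg : MeasurableEmbedding fun x : ℝ => -x := (Homeomorph.neg ℝ).measurableEmbedding
  rw [← Measure.map_neg_eq_self (volume : Measure ℝ), hneg.integrableOn_map_iff]
  simp_rw [Function.comp_def, abs_neg, neg_preimage, neg_Iic, neg_zero]
  exact (integrableOn_Ici_iff_integrableOn_Ioi).2 hIoi

lemma integrable_exp_neg_mul_abs_rpow {α γ : ℝ} (hα : 0 < α) (hγ : 0 < γ) :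
    Integrable fun q : ℝ => exp (-(γ * |q| ^ α)) := by
  refine integrable_comp_abs_of_integrableOn_Ioi (f := fun x => exp (-(γ * x ^ α))) ?_
  simpa [neg_mul] using integrableOn_rpow_mul_exp_neg_mul_rpow neg_one_lt_zero hα hγ

noncomputable def stableIntegrand (α γ x q : ℝ) : ℂ :=
  Complex.exp (((-(γ * |q| ^ α) : ℝ) : ℂ)) * Complex.exp (-(Complex.I * ((q * x : ℝ) : ℂ)))

lemma sdens_eq_integral_stableIntegrand (α γ x : ℝ) :
    sdens α γ x = 1 / (2 * π) * (∫ q, stableIntegrand α γ x q).re := rfl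

lemma norm_stableIntegrand (α γ x q : ℝ) :
    ‖stableIntegrand α γ x q‖ = exp (-(γ * |q| ^ α)) := by
  simp [stableIntegrand, Complex.norm_exp, Complex.mul_re]

lemma continuous_stableIntegrand {α : ℝ} (hα : 0 < α) (γ x : ℝ) :
    Continuous (stableIntegrand α γ x) := by
  unfold stableIntegrand
  fun_prop (disch := exact hα.le)

lemma continuous_sdens {α γ : ℝ} (hα : 0 < α) (hγ : 0 < γ) : Continuous (sdens α γ) := by
  simp_rw [funext (sdens_eq_integral_stableIntegrand α γ)]
  refine continuous_const.mul (Complex.continuous_re.comp ?_)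
  refine continuous_of_dominated (bound := fun q => exp (-(γ * |q| ^ α)))
    (fun x => (continuous_stableIntegrand hα γ x).aestronglyMeasurable)
    (fun x => ae_of_all _ fun q => (norm_stableIntegrand α γ x q).le)
    (integrable_exp_neg_mul_abs_rpow hα hγ) (ae_of_all _ fun q => ?_)
  unfold stableIntegrand
  fun_prop

lemma sdens_zero_pos {α γ : ℝ} (hα : 0 < α) (hγ : 0 < γ) : 0 < sdens α γ 0 := by
  have hreal : ∀ q, stableIntegrand α γ 0 q = ((exp (-(γ * |q| ^ α)) : ℝ) : ℂ) := by
    simp [stableIntegrand, Complex.ofReal_exp]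
  rw [sdens_eq_integral_stableIntegrand, funext hreal, integral_complex_ofReal,
    Complex.ofReal_re]
  have := integral_exp_pos (μ := volume) (integrable_exp_neg_mul_abs_rpow hα hγ)
  positivity

lemma sdens_rpow_mul {s : ℝ} (hs : 0 < s) (α y : ℝ) :
    sdens α (s ^ α) (s * y) = s⁻¹ * sdens α 1 y := by
  have hsubst : ∀ q, stableIntegrand α (s ^ α) (s * y) q = stableIntegrand α 1 y (s * q) := by
    intro q
    rw [stableIntegrand, stableIntegrand, abs_mul, mul_rpow (abs_nonneg s) (abs_nonneg q),
      abs_of_pos hs, one_mul, mul_left_comm q s y, mul_assoc]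
  rw [sdens_eq_integral_stableIntegrand, sdens_eq_integral_stableIntegrand, funext hsubst,
    Measure.integral_comp_mul_left, abs_inv, abs_of_pos hs, Complex.real_smul,
    Complex.re_ofReal_mul]
  ring

noncomputable def stableLaw (α γ : ℝ) : Measure ℝ :=
  volume.withDensity fun x => ENNReal.ofReal (sdens α γ x)

lemma map_const_mul_stableLaw_one {s : ℝ} (hs : 0 < s) (α : ℝ) :
    (stableLaw α 1).map (s * ·) = stableLaw α (s ^ α) := by
  have he := measurableEmbedding_mulLeft₀ hs.ne'
  have hvol : (volume : Measure ℝ) = ENNReal.ofReal s • volume.map (s * ·) := by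
    rw [Real.map_volume_mul_left hs.ne', smul_smul, ← ENNReal.ofReal_mul hs.le, abs_inv,
      abs_of_pos hs, mul_inv_cancel₀ hs.ne', ENNReal.ofReal_one, one_smul]
  ext t ht
  rw [he.map_apply, stableLaw, stableLaw, withDensity_apply _ ht,
    withDensity_apply _ (he.measurable ht)]
  conv_rhs => rw [hvol, Measure.restrict_smul, lintegral_smul_measure, he.restrict_map,
    he.lintegral_map]
  simp_rw [sdens_rpow_mul hs, ENNReal.ofReal_mul (inv_nonneg.2 hs.le)]
  rw [lintegral_const_mul' _ _ ENNReal.ofReal_ne_top, smul_eq_mul, ← mul_assoc,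
    ← ENNReal.ofReal_mul hs.le, mul_inv_cancel₀ hs.ne', ENNReal.ofReal_one, one_mul]

lemma stableLaw_ne_zero {α γ : ℝ} (hα : 0 < α) (hγ : 0 < γ) : stableLaw α γ ≠ 0 := by
  have hcont : Continuous fun x => ENNReal.ofReal (sdens α γ x) :=
    ENNReal.continuous_ofReal.comp (continuous_sdens hα hγ)
  rw [stableLaw, Ne, withDensity_eq_zero_iff hcont.aemeasurable,
    hcont.ae_eq_iff_eq volume continuous_zero]
  intro h
  exact (ENNReal.ofReal_pos.2 (sdens_zero_pos hα hγ)).ne' (congrFun h 0)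

lemma ae_sdens_pos {α γ : ℝ} (hα : 0 < α) (hγ : 0 < γ) :
    ∀ᵐ x ∂stableLaw α γ, 0 < sdens α γ x := by
  rw [stableLaw, ae_withDensity_iff (continuous_sdens hα hγ).measurable.ennreal_ofReal]
  exact ae_of_all _ fun x hx => ENNReal.ofReal_pos.1 (pos_iff_ne_zero.2 hx)

lemma integrable_log_sdens_and_integral_eq {α s : ℝ} (hα : 0 < α) (hs : 0 < s)
    [IsProbabilityMeasure (stableLaw α 1)]
    (hint : Integrable (fun x => log (sdens α 1 x)) (stableLaw α 1)) :
    Integrable (fun x => log (sdens α (s ^ α) x)) (stableLaw α (s ^ α)) ∧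
      ∫ x, log (sdens α (s ^ α) x) ∂stableLaw α (s ^ α) =
        -log s + ∫ x, log (sdens α 1 x) ∂stableLaw α 1 := by
  have he := measurableEmbedding_mulLeft₀ hs.ne'
  have hsplit : (fun y => log (sdens α (s ^ α) (s * y))) =ᵐ[stableLaw α 1]
      fun y => -log s + log (sdens α 1 y) := by
    filter_upwards [ae_sdens_pos hα one_pos] with y hy
    rw [sdens_rpow_mul hs, log_mul (inv_ne_zero hs.ne') hy.ne', log_inv]
  rw [← map_const_mul_stableLaw_one hs, he.integrable_map_iff, he.integral_map]
  refine ⟨((integrable_const _).add hint).congr hsplit.symm, ?_⟩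
  rw [integral_congr_ae hsplit, integral_add (integrable_const _) hint, integral_const,
    probReal_univ, one_smul]

lemma ae_tendsto_average_comp {Ω β : Type*} [MeasurableSpace Ω] [MeasurableSpace β]
    {P : Measure Ω} {μ : Measure β} {W : ℕ → Ω → β} (hW : ∀ n, AEMeasurable (W n) P)
    (hlaw : ∀ n, P.map (W n) = μ) (hindep : Pairwise fun a b => IndepFun (W a) (W b) P)
    {g : β → ℝ} (hg : Measurable g) (hgμ : Integrable g μ) :
    ∀ᵐ ω ∂P, Tendsto (fun N : ℕ => (N : ℝ)⁻¹ * ∑ l ∈ Finset.range N, g (W l ω)) atTop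
      (𝓝 (∫ x, g x ∂μ)) := by
  have hint : Integrable (g ∘ W 0) P := (hlaw 0 ▸ hgμ).comp_aemeasurable (hW 0)
  have hident n : IdentDistrib (g ∘ W n) (g ∘ W 0) P P :=
    (IdentDistrib.mk (hW n) (hW 0) (by rw [hlaw, hlaw])).comp hg
  have hmean : ∫ ω, g (W 0 ω) ∂P = ∫ x, g x ∂μ := by
    rw [← hlaw 0, integral_map (hW 0) hg.aestronglyMeasurable]
  have hslln := strong_law_ae (fun n => g ∘ W n) hint (fun a b hab => (hindep hab).comp hg hg)
    hident
  simp only [smul_eq_mul, Function.comp_apply] at hslln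
  rwa [hmean] at hslln

lemma ae_tendsto_average_log_sdens {Ω : Type*} [MeasurableSpace Ω] {P : Measure Ω}
    [IsProbabilityMeasure P] {α γ : ℝ} (hα : 0 < α) (hγ : 0 < γ)
    (hint : Integrable (fun x => log (sdens α 1 x)) (stableLaw α 1)) {W : ℕ → Ω → ℝ}
    (hlaw : ∀ n, P.map (W n) = stableLaw α γ)
    (hindep : Pairwise fun a b => IndepFun (W a) (W b) P) :
    ∀ᵐ ω ∂P, Tendsto (fun N : ℕ => (N : ℝ)⁻¹ * ∑ l ∈ Finset.range N, log (sdens α γ (W l ω)))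
      atTop (𝓝 (-(1 / α) * log γ + ∫ x, log (sdens α 1 x) ∂stableLaw α 1)) := by
  have hW n : AEMeasurable (W n) P :=
    .of_map_ne_zero ((hlaw n).symm ▸ stableLaw_ne_zero hα hγ)
  obtain ⟨s, hs, rfl⟩ : ∃ s, 0 < s ∧ γ = s ^ α :=
    ⟨γ ^ (1 / α), rpow_pos_of_pos hγ _, by
      rw [← rpow_mul hγ.le, one_div_mul_cancel hα.ne', rpow_one]⟩
  have : IsProbabilityMeasure ((stableLaw α 1).map (s * ·)) := by
    rw [map_const_mul_stableLaw_one hs, ← hlaw 0]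
    exact Measure.isProbabilityMeasure_map (hW 0)
  have := Measure.isProbabilityMeasure_of_map (μ := stableLaw α 1) (s * ·)
  obtain ⟨hint_s, hmean⟩ := integrable_log_sdens_and_integral_eq hα hs hint
  have hlog : -(1 / α) * log (s ^ α) = -log s := by rw [log_rpow hs]; field_simp
  rw [hlog, ← hmean]
  exact ae_tendsto_average_comp hW hlaw hindep (continuous_sdens hα hγ).measurable.log hint_s

lemma ae_forall_tendsto_average_log_sdens {Ω ι : Type*} [MeasurableSpace Ω] [Countable ι]
    {P : Measure Ω} [IsProbabilityMeasure P] {α : ℝ} (hα : 0 < α)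
    (hint : Integrable (fun x => log (sdens α 1 x)) (stableLaw α 1)) {γ : ι → ℝ}
    (hγ : ∀ j, 0 < γ j) {W : ι → ℕ → Ω → ℝ} (hindep : iIndepFun (fun p : ι × ℕ => W p.1 p.2) P)
    (hlaw : ∀ j n, P.map (W j n) = stableLaw α (γ j)) :
    ∀ᵐ ω ∂P, ∀ j, Tendsto (fun N : ℕ => (N : ℝ)⁻¹ * ∑ l ∈ Finset.range N,
      log (sdens α (γ j) (W j l ω))) atTop
        (𝓝 (-(1 / α) * log (γ j) + ∫ x, log (sdens α 1 x) ∂stableLaw α 1)) :=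
  ae_all_iff.2 fun j => ae_tendsto_average_log_sdens hα (hγ j) hint (hlaw j)
    fun a b hab => hindep.indepFun (i := (j, a)) (j := (j, b)) (by simpa using hab)

lemma tendsto_one_div_mul_sub_mul_log {u : ℕ → ℝ} {a : ℝ} (c : ℝ)
    (hu : Tendsto (fun N : ℕ => (N : ℝ)⁻¹ * u N) atTop (𝓝 a)) :
    Tendsto (fun N : ℕ => 1 / (N : ℝ) * (u N - c * log N)) atTop (𝓝 a) := by
  have hlog : Tendsto (fun N : ℕ => log N / (N : ℝ)) atTop (𝓝 0) :=
    isLittleO_log_id_atTop.tendsto_div_nhds_zero.comp tendsto_natCast_atTop_atTop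
  simpa using (hu.sub (hlog.const_mul c)).congr fun N => by ring

theorem stmt14_general {Ω : Type*} [MeasurableSpace Ω] (P : Measure Ω) [IsProbabilityMeasure P]
    (α : ℝ) (hα : 0 < α)
    (hint : Integrable (fun x => Real.log (sdens α 1 x))
      (volume.withDensity fun x => ENNReal.ofReal (sdens α 1 x)))
    (m : ℕ)
    (γ γ' : Fin m → ℝ) (hγ : ∀ j, 0 < γ j) (hγ' : ∀ j, 0 < γ' j)
    (k k' : ℕ)
    (Z Z' : Fin m → ℕ → Ω → ℝ)
    (hZindep : iIndepFun
      (fun p : Fin m × ℕ => Z p.1 p.2) P)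
    (hZ'indep : iIndepFun
      (fun p : Fin m × ℕ => Z' p.1 p.2) P)
    (hZ : ∀ j n, Measure.map (Z j n) P =
      volume.withDensity fun x => ENNReal.ofReal (sdens α (γ j) x))
    (hZ' : ∀ j n, Measure.map (Z' j n) P =
      volume.withDensity fun x => ENNReal.ofReal (sdens α (γ' j) x)) :
    ∀ᵐ ω ∂P,
      Filter.Tendsto
        (fun N : ℕ => (1 / (N : ℝ)) *
          (((∑ j, ∑ l ∈ Finset.range N, Real.log (sdens α (γ j) (Z j l ω))) -
              (k : ℝ) / 2 * Real.log N) -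
            ((∑ j, ∑ l ∈ Finset.range N, Real.log (sdens α (γ' j) (Z' j l ω))) -
              (k' : ℝ) / 2 * Real.log N)))
        Filter.atTop
        (nhds (-(1 / α) * ∑ j, (Real.log (γ j) - Real.log (γ' j)))) ∧
      Filter.Tendsto
        (fun N : ℕ => (1 / (N : ℝ)) *
          ((-∑ j, ((N : ℝ) * (Real.log (γ j) / α) + (k : ℝ) / 2 * Real.log N)) -
            (-∑ j, ((N : ℝ) * (Real.log (γ' j) / α) + (k' : ℝ) / 2 * Real.log N))))
        Filter.atTop
        (nhds (-(1 / α) * ∑ j, (Real.log (γ j) - Real.log (γ' j)))) := by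
  set E := ∫ x, log (sdens α 1 x) ∂stableLaw α 1
  have hlimit : -(1 / α) * ∑ j, (log (γ j) - log (γ' j)) =
      ∑ j, (-(1 / α) * log (γ j) + E) - ∑ j, (-(1 / α) * log (γ' j) + E) := by
    rw [← Finset.sum_sub_distrib, Finset.mul_sum]
    exact Finset.sum_congr rfl fun j _ => by ring
  filter_upwards [ae_forall_tendsto_average_log_sdens hα hint hγ hZindep hZ,
    ae_forall_tendsto_average_log_sdens hα hint hγ' hZ'indep hZ'] with ω hZω hZ'ω
  constructor
  · refine (tendsto_one_div_mul_sub_mul_log ((k : ℝ) / 2 - k' / 2)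
      (u := fun N => ∑ j, ∑ l ∈ Finset.range N, log (sdens α (γ j) (Z j l ω)) -
        ∑ j, ∑ l ∈ Finset.range N, log (sdens α (γ' j) (Z' j l ω))) ?_).congr fun N => by ring
    rw [hlimit]
    refine ((tendsto_finsetSum _ fun j _ => hZω j).sub
      (tendsto_finsetSum _ fun j _ => hZ'ω j)).congr fun N => ?_
    simp only [mul_sub, Finset.mul_sum]
  · refine (tendsto_one_div_mul_sub_mul_log ((m : ℝ) * (k / 2) - m * (k' / 2))
      (u := fun N => N * (-(1 / α) * ∑ j, (log (γ j) - log (γ' j)))) ?_).congr fun N => ?_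
    · refine tendsto_const_nhds.congr' ?_
      filter_upwards [eventually_ne_atTop 0] with N hN
      field_simp
    · simp only [Finset.sum_add_distrib, Finset.sum_const, Finset.card_univ, Fintype.card_fin,
        nsmul_eq_mul, ← Finset.mul_sum, ← Finset.sum_div, Finset.sum_sub_distrib]
      ring

theorem stmt14 {Ω : Type*} [MeasurableSpace Ω] (P : Measure Ω) [IsProbabilityMeasure P]
    (α : ℝ) (hα : 0 < α) (hα2 : α ≤ 2)
    (hint : Integrable (fun x => Real.log (sdens α 1 x))
      (volume.withDensity fun x => ENNReal.ofReal (sdens α 1 x)))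
    (m : ℕ) (hm : 1 ≤ m)
    (γ γ' : Fin m → ℝ) (hγ : ∀ j, 0 < γ j) (hγ' : ∀ j, 0 < γ' j)
    (k k' : ℕ)
    (Z Z' : Fin m → ℕ → Ω → ℝ)
    (hZindep : iIndepFun
      (fun p : Fin m × ℕ => Z p.1 p.2) P)
    (hZ'indep : iIndepFun
      (fun p : Fin m × ℕ => Z' p.1 p.2) P)
    (hZ : ∀ j n, Measure.map (Z j n) P =
      volume.withDensity fun x => ENNReal.ofReal (sdens α (γ j) x))
    (hZ' : ∀ j n, Measure.map (Z' j n) P =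
      volume.withDensity fun x => ENNReal.ofReal (sdens α (γ' j) x)) :
    ∀ᵐ ω ∂P,
      Filter.Tendsto
        (fun N : ℕ => (1 / (N : ℝ)) *
          (((∑ j, ∑ l ∈ Finset.range N, Real.log (sdens α (γ j) (Z j l ω))) -
              (k : ℝ) / 2 * Real.log N) -
            ((∑ j, ∑ l ∈ Finset.range N, Real.log (sdens α (γ' j) (Z' j l ω))) -
              (k' : ℝ) / 2 * Real.log N)))
        Filter.atTop
        (nhds (-(1 / α) * ∑ j, (Real.log (γ j) - Real.log (γ' j)))) ∧
      Filter.Tendsto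
        (fun N : ℕ => (1 / (N : ℝ)) *
          ((-∑ j, ((N : ℝ) * (Real.log (γ j) / α) + (k : ℝ) / 2 * Real.log N)) -
            (-∑ j, ((N : ℝ) * (Real.log (γ' j) / α) + (k' : ℝ) / 2 * Real.log N))))
        Filter.atTop
        (nhds (-(1 / α) * ∑ j, (Real.log (γ j) - Real.log (γ' j)))) :=
  stmt14_general P α hα hint m γ γ' hγ hγ' k k' Z Z' hZindep hZ'indep hZ hZ'
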